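/- Let T ≥ 1 be a natural number and let f, f_A, f_B, λ_min, λ be real numbers with 0 < λ_min ≤ λ ≤ 1, f < f_A, and f_B > (f_A − f)/λ_min + f. Let u : ℕ → ℝ satisfy u T = λ·f_B and u k = λ·f + u (k + 1) for every k < T. Then: (i) f_B > f_A and f_B > f; and (ii) for every k < T, f + u (k + 1) > f_A + λ·((T − k)·f). Consequently, a bribe exceeding the threshold (f_A − f)/λ_min + f — which is independent of the timeout T — suffices to make every miner, at every round, strictly prefer excluding Alice's transaction (and including Bob's transaction in the final round) over including Alice's transaction. (This is the quantitative core of Theorem 2, which tightens the exponential-in-timeout bound of Winzer et al. to a timeout-independent cost.) -/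
import Mathlib


theorem stmt_6 (T : ℕ) (hT : 1 ≤ T) (f f_A f_B lam_min lam : ℝ)
    (h1 : 0 < lam_min) (h2 : lam_min ≤ lam) (h3 : lam ≤ 1)
    (h4 : f < f_A) (h5 : f_B > (f_A - f) / lam_min + f)
    (u : ℕ → ℝ) (hu : u T = lam * f_B)
    (hrec : ∀ k < T, u k = lam * f + u (k + 1)) :
    (f_B > f_A ∧ f_B > f) ∧
      ∀ k < T, f + u (k + 1) > f_A + lam * (((T - k : ℕ) : ℝ) * f) := by
  have hAf : 0 < f_A - f := by linarith
  have hdiv : f_A - f ≤ (f_A - f) / lam_min := by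
    rw [le_div_iff₀ h1]
    nlinarith
  have hBf : f_B > f := by
    have : 0 < (f_A - f) / lam_min := div_pos hAf h1
    linarith
  have hmin : lam_min * (f_B - f) > f_A - f := by
    have := (div_lt_iff₀ h1).mp (by linarith : (f_A - f) / lam_min < f_B - f)
    linarith
  have hlamkey : lam * (f_B - f) > f_A - f := by
    nlinarith
  refine ⟨⟨by linarith, hBf⟩, ?_⟩
  have key : ∀ m, m ≤ T → u (T - m) = lam * f * m + lam * f_B := by
    intro m
    induction m with
    | zero => intro _; simpa using hu
    | succ n ih =>
      intro h
      have hlt : T - (n + 1) < T := by omega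
      have heq : T - (n + 1) + 1 = T - n := by omega
      rw [hrec _ hlt, heq, ih (by omega)]
      push_cast
      ring
  intro k hk
  have h1' : k + 1 ≤ T := hk
  have hTk : T - (T - (k + 1)) = k + 1 := by omega
  have hu1 : u (k + 1) = lam * f * (T - (k + 1) : ℕ) + lam * f_B := by
    have := key (T - (k + 1)) (by omega)
    rwa [hTk] at this
  have hcast : ((T - k : ℕ) : ℝ) = ((T - (k + 1) : ℕ) : ℝ) + 1 := by
    have h2' : T - k = T - (k + 1) + 1 := by omega
    rw [h2']
    push_cast
    ring
  rw [hu1, hcast]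
  nlinarith
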